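/- arXiv:2201.08414 — 3 statements merged into one kernel-verified Lean document; each statement's English description precedes it below -/
import Mathlib

section
/- Let λ, y be reals with λ ≥ 0 and let q, ψ : [0,∞) → ℝ be differentiable functions with ψ(0)=0 satisfying ψ'(t) = -(y²+λ)ψ(t) + λ q(t) + q'(t). If q(0) = ψ(0) = 0, then ∫₀ᵀ q(t)(y²+2λ)ψ(t) dt = (1/2)(q(T)-ψ(T))² + ∫₀ᵀ [(y²+λ)ψ(t)² + λ q(t)²] dt ≥ 0. -/
/-!
Along the relaxation equation `ψ' = -c ψ + λ q + q'` the energy `½ (q - ψ)²` has derivative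
`(q - ψ)(c ψ - λ q) = (c + λ) q ψ - (c ψ² + λ q²)`. Integrating from the rest state
`q(0) = ψ(0) = 0` gives the identity; for `c, λ ≥ 0` its right-hand side is a sum of squares.
-/

open intervalIntegral

section Relaxation

variable {c lam : ℝ} {q q' ψ : ℝ → ℝ}

theorem hasDerivAt_half_sq_sub_of_relaxation {t : ℝ} (hq : HasDerivAt q (q' t) t)
    (hψ : HasDerivAt ψ (-c * ψ t + lam * q t + q' t) t) :
    HasDerivAt (fun s => 1 / 2 * (q s - ψ s) ^ 2)
      (q t * (c + lam) * ψ t - (c * ψ t ^ 2 + lam * q t ^ 2)) t := by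
  refine (((hq.sub hψ).pow 2).const_mul (1 / 2 : ℝ)).congr_deriv ?_
  simp only [Pi.sub_apply, Nat.cast_ofNat]
  ring

theorem integral_relaxation_energy (hq : ∀ t, HasDerivAt q (q' t) t)
    (hψ : ∀ t, HasDerivAt ψ (-c * ψ t + lam * q t + q' t) t) (a b : ℝ) :
    ∫ t in a..b, q t * (c + lam) * ψ t =
      1 / 2 * (q b - ψ b) ^ 2 - 1 / 2 * (q a - ψ a) ^ 2 +
        ∫ t in a..b, (c * ψ t ^ 2 + lam * q t ^ 2) := by
  have hqc : Continuous q := continuous_iff_continuousAt.2 fun t => (hq t).continuousAt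
  have hψc : Continuous ψ := continuous_iff_continuousAt.2 fun t => (hψ t).continuousAt
  have hcross : IntervalIntegrable (fun t => q t * (c + lam) * ψ t) MeasureTheory.volume a b :=
    (by fun_prop : Continuous fun t => q t * (c + lam) * ψ t).intervalIntegrable a b
  have hdiss : IntervalIntegrable (fun t => c * ψ t ^ 2 + lam * q t ^ 2)
      MeasureTheory.volume a b :=
    (by fun_prop : Continuous fun t => c * ψ t ^ 2 + lam * q t ^ 2).intervalIntegrable a b
  have hftc := integral_eq_sub_of_hasDerivAt
    (fun t _ => hasDerivAt_half_sq_sub_of_relaxation (hq t) (hψ t)) (hcross.sub hdiss)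
  rw [integral_sub hcross hdiss] at hftc
  linarith

theorem integral_dissipation_nonneg (hc : 0 ≤ c) (hlam : 0 ≤ lam) {a b : ℝ} (hab : a ≤ b) :
    0 ≤ ∫ t in a..b, (c * ψ t ^ 2 + lam * q t ^ 2) :=
  integral_nonneg hab fun t _ => by positivity

end Relaxation

theorem dissipation_integral_general (lam y : ℝ) (hlam : 0 ≤ lam) (q ψ : ℝ → ℝ)
    (hq : Differentiable ℝ q)
    (hψ0 : ψ 0 = 0) (hq0 : q 0 = 0)
    (hode : ∀ t, HasDerivAt ψ (-(y ^ 2 + lam) * ψ t + lam * q t + deriv q t) t) :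
    ∀ T : ℝ, 0 ≤ T →
      (∫ t in (0:ℝ)..T, q t * (y ^ 2 + 2 * lam) * ψ t) =
        (1 / 2) * (q T - ψ T) ^ 2
          + ∫ t in (0:ℝ)..T, ((y ^ 2 + lam) * (ψ t) ^ 2 + lam * (q t) ^ 2) ∧
      0 ≤ ∫ t in (0:ℝ)..T, q t * (y ^ 2 + 2 * lam) * ψ t := by
  intro T hT
  have energy := integral_relaxation_energy (fun t => (hq t).hasDerivAt) hode 0 T
  rw [hq0, hψ0, show y ^ 2 + lam + lam = y ^ 2 + 2 * lam by ring] at energy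
  have hdiss := integral_dissipation_nonneg (c := y ^ 2 + lam) (q := q) (ψ := ψ)
    (by positivity) hlam hT
  refine ⟨by linarith, ?_⟩
  linarith [sq_nonneg (q T - ψ T)]

theorem dissipation_integral (lam y : ℝ) (hlam : 0 ≤ lam) (q ψ : ℝ → ℝ)
    (hq : Differentiable ℝ q) (hψ : Differentiable ℝ ψ)
    (hψ0 : ψ 0 = 0) (hq0 : q 0 = 0)
    (hode : ∀ t, HasDerivAt ψ (-(y ^ 2 + lam) * ψ t + lam * q t + deriv q t) t) :
    ∀ T : ℝ, 0 ≤ T →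
      (∫ t in (0:ℝ)..T, q t * (y ^ 2 + 2 * lam) * ψ t) =
        (1 / 2) * (q T - ψ T) ^ 2
          + ∫ t in (0:ℝ)..T, ((y ^ 2 + lam) * (ψ t) ^ 2 + lam * (q t) ^ 2) ∧
      0 ≤ ∫ t in (0:ℝ)..T, q t * (y ^ 2 + 2 * lam) * ψ t :=
  dissipation_integral_general lam y hlam q ψ hq hψ0 hq0 hode
end

section
/- Let ϑ < 0, r > 0, and let q, φ : [0,∞) → ℝ be differentiable with q(0) = φ(0) = 0 and φ'(t) = ϑφ(t) + q'(t). Then for every T > 0, -∫₀ᵀ r q(t) ϑ φ(t) dt = (r/2)(φ(T)-q(T))² - ϑ r ∫₀ᵀ φ(t)² dt, and hence ∫₀ᵀ r q(t)(-ϑ)φ(t) dt ≥ 0. -/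
theorem phi_dissipation_integral (ϑ r : ℝ) (hϑ : ϑ < 0) (hr : 0 < r)
    (q φ : ℝ → ℝ) (hq : Differentiable ℝ q) (hφ : Differentiable ℝ φ)
    (hq0 : q 0 = 0) (hφ0 : φ 0 = 0)
    (hode : ∀ t, HasDerivAt φ (ϑ * φ t + deriv q t) t) :
    ∀ T : ℝ, 0 < T →
      (-(∫ t in (0:ℝ)..T, r * q t * ϑ * φ t) =
        (r / 2) * (φ T - q T) ^ 2 - ϑ * r * ∫ t in (0:ℝ)..T, (φ t) ^ 2) ∧
      0 ≤ ∫ t in (0:ℝ)..T, r * q t * (-ϑ) * φ t := by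
  intro T hT
  have hcφ : Continuous φ := hφ.continuous
  have hcq : Continuous q := hq.continuous
  have hd : ∀ t, HasDerivAt (fun s => (φ s - q s) ^ 2 / 2) ((φ t - q t) * (ϑ * φ t)) t := by
    intro t
    have h1 : HasDerivAt (fun s => φ s - q s) (ϑ * φ t) t := by
      have h2 := (hode t).sub ((hq t).hasDerivAt)
      rw [show ϑ * φ t = ϑ * φ t + deriv q t - deriv q t by ring]; exact h2
    have h3 := ((h1.mul h1).div_const 2)
    have : HasDerivAt (fun s => (φ s - q s) * (φ s - q s) / 2)
        ((ϑ * φ t * (φ t - q t) + (φ t - q t) * (ϑ * φ t)) / 2) t := h3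
    have hfun : (fun s => (φ s - q s) ^ 2 / 2) = fun s => (φ s - q s) * (φ s - q s) / 2 := by
      funext s; ring
    rw [hfun]
    convert this using 1
    ring
  have hci : Continuous (fun t => (φ t - q t) * (ϑ * φ t)) := by continuity
  have key : (∫ t in (0:ℝ)..T, (φ t - q t) * (ϑ * φ t)) = (φ T - q T) ^ 2 / 2 := by
    have := intervalIntegral.integral_eq_sub_of_hasDerivAt
      (fun t _ => hd t) (hci.intervalIntegrable 0 T)
    simpa [hq0, hφ0] using this
  have i1 : IntervalIntegrable (fun t => φ t ^ 2) MeasureTheory.volume 0 T :=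
    ((hcφ.pow 2)).intervalIntegrable 0 T
  have i2 : IntervalIntegrable (fun t => q t * φ t) MeasureTheory.volume 0 T :=
    (hcq.mul hcφ).intervalIntegrable 0 T
  have split : (∫ t in (0:ℝ)..T, (φ t - q t) * (ϑ * φ t))
      = ϑ * (∫ t in (0:ℝ)..T, φ t ^ 2) - ϑ * (∫ t in (0:ℝ)..T, q t * φ t) := by
    rw [← intervalIntegral.integral_const_mul, ← intervalIntegral.integral_const_mul,
      ← intervalIntegral.integral_sub (i1.const_mul ϑ) (i2.const_mul ϑ)]
    apply intervalIntegral.integral_congr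
    intro t _
    ring
  have hqφ : ϑ * (∫ t in (0:ℝ)..T, q t * φ t)
      = ϑ * (∫ t in (0:ℝ)..T, φ t ^ 2) - (φ T - q T) ^ 2 / 2 := by
    rw [key] at split; linarith
  have e1 : (∫ t in (0:ℝ)..T, r * q t * ϑ * φ t)
      = r * (ϑ * ∫ t in (0:ℝ)..T, q t * φ t) := by
    rw [← mul_assoc, ← intervalIntegral.integral_const_mul]
    apply intervalIntegral.integral_congr
    intro t _
    ring
  have main : -(∫ t in (0:ℝ)..T, r * q t * ϑ * φ t) =
      (r / 2) * (φ T - q T) ^ 2 - ϑ * r * ∫ t in (0:ℝ)..T, (φ t) ^ 2 := by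
    rw [e1, hqφ]; ring
  refine ⟨main, ?_⟩
  have e2 : (∫ t in (0:ℝ)..T, r * q t * (-ϑ) * φ t)
      = -(∫ t in (0:ℝ)..T, r * q t * ϑ * φ t) := by
    rw [← intervalIntegral.integral_neg]
    apply intervalIntegral.integral_congr
    intro t _
    ring
  rw [e2, main]
  have hA : 0 ≤ ∫ t in (0:ℝ)..T, (φ t) ^ 2 :=
    intervalIntegral.integral_nonneg hT.le (fun t _ => sq_nonneg _)
  nlinarith [sq_nonneg (φ T - q T), mul_nonneg (mul_nonneg (neg_nonneg.2 hϑ.le) hr.le) hA]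
end

section
/- Let (z_k, u_k, v_k) for k = 1,…,M with z_k distinct points in the upper half-plane and u_k, v_k ∈ ℂ, and suppose there exists a finite positive measure μ on [0,∞) with G(z) = ∫₀^∞ dμ(t)/(t-z) satisfying G(z_k)u_k = v_k for all k. Then the M×M Hermitian matrix S₁ with entries (S₁)_{ij} = (ū_i v_j − v̄_i u_j)/(z_j − z̄_i) is positive semidefinite. -/
/-!
Each interpolation condition `G(z_k) u_k = v_k` together with the resolvent identity
`1/(t - z_j) - 1/(t - z̄_i) = (z_j - z̄_i) / ((t - z̄_i)(t - z_j))` shows that the Pick entry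
`(ū_i v_j - v̄_i u_j)/(z_j - z̄_i)` is the `L²(μ)` inner product of the functions
`t ↦ u_i/(t - z_i)` and `t ↦ u_j/(t - z_j)`. So `S₁` is a Gram matrix, hence positive semidefinite.
-/

open MeasureTheory ComplexOrder
open scoped BoundedContinuousFunction ComplexConjugate

theorem Matrix.posSemidef_integral_conj_mul {α 𝕜 ι : Type*} [TopologicalSpace α]
    [MeasurableSpace α] [BorelSpace α] [RCLike 𝕜] [Finite ι]
    (μ : Measure α) [IsFiniteMeasure μ] (f : ι → α →ᵇ 𝕜) :
    (Matrix.of fun i j => ∫ x, conj (f i x) * f j x ∂μ).PosSemidef := by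
  convert Matrix.posSemidef_gram 𝕜 fun i => BoundedContinuousFunction.toLp 2 μ 𝕜 (f i) using 1
  ext i j
  simp [Matrix.gram_apply, BoundedContinuousFunction.inner_toLp, mul_comm]

section CauchyKernel

variable {w w₁ w₂ : ℂ}

lemma Complex.ofReal_sub_ne_zero_of_im_ne_zero (hw : w.im ≠ 0) (t : ℝ) : (t : ℂ) - w ≠ 0 :=
  fun h => hw (by simpa using congrArg Complex.im h)

lemma Complex.norm_inv_ofReal_sub_le (hw : w.im ≠ 0) (t : ℝ) : ‖((t : ℂ) - w)⁻¹‖ ≤ |w.im|⁻¹ := by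
  rw [norm_inv]
  refine inv_anti₀ (abs_pos.mpr hw) ?_
  simpa using Complex.abs_im_le_norm ((t : ℂ) - w)

noncomputable def cauchyKernel (w : ℂ) (hw : w.im ≠ 0) : ℝ →ᵇ ℂ :=
  .ofNormedAddCommGroup (fun t => ((t : ℂ) - w)⁻¹)
    ((Complex.continuous_ofReal.sub continuous_const).inv₀
      (Complex.ofReal_sub_ne_zero_of_im_ne_zero hw))
    _ (Complex.norm_inv_ofReal_sub_le hw)

@[simp]
lemma cauchyKernel_apply (hw : w.im ≠ 0) (t : ℝ) : cauchyKernel w hw t = ((t : ℂ) - w)⁻¹ :=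
  rfl

lemma integral_cauchyKernel_sub_conj (μ : Measure ℝ) [IsFiniteMeasure μ]
    (hw₁ : w₁.im ≠ 0) (hw₂ : w₂.im ≠ 0) :
    (∫ t, cauchyKernel w₂ hw₂ t ∂μ) - conj (∫ t, cauchyKernel w₁ hw₁ t ∂μ) =
      (w₂ - conj w₁) * ∫ t, conj (cauchyKernel w₁ hw₁ t) * cauchyKernel w₂ hw₂ t ∂μ := by
  have hw₁' : (conj w₁).im ≠ 0 := by simpa using hw₁
  have hconj : ∀ t, conj (cauchyKernel w₁ hw₁ t) = cauchyKernel (conj w₁) hw₁' t := by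
    simp [map_inv₀]
  rw [← integral_conj, ← integral_const_mul, ← integral_sub ((cauchyKernel w₂ hw₂).integrable μ)
    (by simpa only [hconj] using (cauchyKernel (conj w₁) hw₁').integrable μ)]
  refine integral_congr_ae (ae_of_all _ fun t => ?_)
  have h₁ := Complex.ofReal_sub_ne_zero_of_im_ne_zero hw₁' t
  have h₂ := Complex.ofReal_sub_ne_zero_of_im_ne_zero hw₂ t
  simp only [cauchyKernel_apply, map_inv₀, map_sub, Complex.conj_ofReal]
  field_simp
  ring

end CauchyKernel

lemma pick_entry_eq_integral (μ : Measure ℝ) [IsFiniteMeasure μ] {w₁ w₂ a₁ a₂ b₁ b₂ : ℂ}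
    (hw₁ : 0 < w₁.im) (hw₂ : 0 < w₂.im)
    (h₁ : (∫ t, cauchyKernel w₁ hw₁.ne' t ∂μ) * a₁ = b₁)
    (h₂ : (∫ t, cauchyKernel w₂ hw₂.ne' t ∂μ) * a₂ = b₂) :
    (star a₁ * b₂ - star b₁ * a₂) / (w₂ - star w₁) =
      ∫ t, conj ((a₁ • cauchyKernel w₁ hw₁.ne') t) * (a₂ • cauchyKernel w₂ hw₂.ne') t ∂μ := by
  have hden : w₂ - conj w₁ ≠ 0 := fun h => by
    have := congrArg Complex.im h
    simp only [Complex.sub_im, Complex.conj_im, Complex.zero_im] at this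
    linarith
  have hrhs : ∫ t, conj ((a₁ • cauchyKernel w₁ hw₁.ne') t) * (a₂ • cauchyKernel w₂ hw₂.ne') t ∂μ =
      conj a₁ * a₂ * ∫ t, conj (cauchyKernel w₁ hw₁.ne' t) * cauchyKernel w₂ hw₂.ne' t ∂μ := by
    rw [← integral_const_mul]
    congr 1
    funext t
    simp only [BoundedContinuousFunction.coe_smul, smul_eq_mul, map_mul]
    ring
  rw [hrhs, Complex.star_def, div_eq_iff hden, ← h₁, ← h₂, map_mul]
  linear_combination conj a₁ * a₂ * integral_cauchyKernel_sub_conj μ hw₁.ne' hw₂.ne'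

theorem pick_matrix_psd_general (M : ℕ) (z u v : Fin M → ℂ)
    (hzim : ∀ k, 0 < (z k).im)
    (μ : Measure ℝ) [IsFiniteMeasure μ]
    (hinterp : ∀ k, (∫ t, 1 / ((t : ℂ) - z k) ∂μ) * u k = v k) :
    (Matrix.of (fun i j : Fin M =>
      (star (u i) * v j - star (v i) * u j) / (z j - star (z i)))).PosSemidef := by
  have hS : Matrix.of (fun i j : Fin M =>
      (star (u i) * v j - star (v i) * u j) / (z j - star (z i))) =
      Matrix.of fun i j => ∫ t, conj ((u i • cauchyKernel (z i) (hzim i).ne') t) *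
        (u j • cauchyKernel (z j) (hzim j).ne') t ∂μ := by
    ext i j
    exact pick_entry_eq_integral μ (hzim i) (hzim j) (by simpa using hinterp i)
      (by simpa using hinterp j)
  rw [hS]
  exact Matrix.posSemidef_integral_conj_mul μ fun k => u k • cauchyKernel (z k) (hzim k).ne'

theorem pick_matrix_psd (M : ℕ) (z u v : Fin M → ℂ)
    (hz : Function.Injective z) (hzim : ∀ k, 0 < (z k).im)
    (μ : Measure ℝ) [IsFiniteMeasure μ] (hsupp : μ (Set.Iio 0) = 0)
    (hinterp : ∀ k, (∫ t, 1 / ((t : ℂ) - z k) ∂μ) * u k = v k) :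
    (Matrix.of (fun i j : Fin M =>
      (star (u i) * v j - star (v i) * u j) / (z j - star (z i)))).PosSemidef :=
  pick_matrix_psd_general M z u v hzim μ hinterp
end
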